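/- Let H ∈ (1/2,1). There is a constant C_H depending only on H such that for all 0 < s < t and all δ ∈ (0,1]: |d(δ,s,t)| ≤ C_H δ s (t^{−1} + 1), where d(δ,s,t) := (t^{2H}/2) ϑ₁(δ/t) − ((t−s)^{2H}/2) ϑ₁(δ/(t−s)) and ϑ₁(x) := |1+x|^{2H} − 1 − |x|^{2H}. -/

import Mathlib

open Real Set

noncomputable section

/-- `ϑ₁(x) = |1+x|^{2H} − 1 − |x|^{2H}`. -/
def theta1 (H x : ℝ) : ℝ := |1 + x| ^ (2*H) - 1 - |x| ^ (2*H)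

/-- `d(δ,s,t) = (t^{2H}/2) ϑ₁(δ/t) − ((t−s)^{2H}/2) ϑ₁(δ/(t−s))`. -/
def dFn (H δ s t : ℝ) : ℝ :=
  t ^ (2*H) / 2 * theta1 H (δ / t) - (t - s) ^ (2*H) / 2 * theta1 H (δ / (t - s))

end

/-
With `p = 2H ∈ (1,2)` and `φ(u) = (u+δ)^p − u^p`, one has `d(δ,s,t) = (φ(t) − φ(t−s))/2`.
Since `u ↦ u^p` is convex, `φ` is nondecreasing, so `d ≥ 0`; since `u ↦ u^{p-1}` is concave,
`φ(u) − pδu^{p-1}` is nonincreasing, so `2d ≤ pδ(t^{p-1} − (t−s)^{p-1})`, and this is at most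
`pδ s t^{p-2} ≤ pδ s (t⁻¹ + 1)`. Hence `C_H = H` works.
-/

lemma rpow_add_sub_rpow_le {q a δ : ℝ} (hq0 : 0 ≤ q) (hq1 : q ≤ 1) (ha : 0 < a) (hδ : 0 ≤ δ) :
    (a + δ) ^ q - a ^ q ≤ q * δ * a ^ (q - 1) := by
  have hδa : 0 ≤ δ / a := div_nonneg hδ ha.le
  have hfactor : (a + δ) ^ q = a ^ q * (1 + δ / a) ^ q := by
    rw [← mul_rpow ha.le (by linarith)]
    congr 1
    field_simp
  have htangent : (1 + δ / a) ^ q ≤ 1 + q * (δ / a) :=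
    rpow_one_add_le_one_add_mul_self (by linarith) hq0 hq1
  calc (a + δ) ^ q - a ^ q ≤ a ^ q * (1 + q * (δ / a)) - a ^ q := by
        rw [hfactor]; gcongr
    _ = q * δ * (a ^ q / a) := by field_simp; ring
    _ = q * δ * a ^ (q - 1) := by rw [rpow_sub_one ha.ne']

lemma rpow_sub_rpow_le_mul_rpow_sub_one {q a t : ℝ} (hq : q ≤ 1) (ha : 0 < a) (hat : a ≤ t) :
    t ^ q - a ^ q ≤ (t - a) * t ^ (q - 1) := by
  have ht : 0 < t := ha.trans_le hat
  have hmono : t ^ (q - 1) ≤ a ^ (q - 1) := rpow_le_rpow_of_nonpos ha hat (by linarith)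
  have hta : t ^ q = t * t ^ (q - 1) := by rw [rpow_sub_one ht.ne']; field_simp
  have haa : a ^ q = a * a ^ (q - 1) := by rw [rpow_sub_one ha.ne']; field_simp
  rw [hta, haa]
  nlinarith

lemma rpow_le_inv_add_one {e t : ℝ} (he1 : -1 ≤ e) (he0 : e ≤ 0) (ht : 0 < t) :
    t ^ e ≤ t⁻¹ + 1 := by
  rcases le_total t 1 with h | h
  · have : t ^ e ≤ t ^ (-1 : ℝ) := rpow_le_rpow_of_exponent_ge ht h he1
    rw [rpow_neg_one] at this
    linarith
  · have : t ^ e ≤ t ^ (0 : ℝ) := rpow_le_rpow_of_exponent_le h he0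
    rw [rpow_zero] at this
    linarith [inv_nonneg.mpr ht.le]

lemma hasDerivAt_add_const_rpow {p δ : ℝ} (hp : 1 ≤ p) (u : ℝ) :
    HasDerivAt (fun u : ℝ => (u + δ) ^ p) (p * (u + δ) ^ (p - 1)) u := by
  simpa using ((hasDerivAt_id u).add_const δ).rpow_const (Or.inr hp)

lemma monotoneOn_rpow_add_sub_rpow {p δ : ℝ} (hp : 1 ≤ p) (hδ : 0 ≤ δ) :
    MonotoneOn (fun u : ℝ => (u + δ) ^ p - u ^ p) (Ici 0) := by
  refine monotoneOn_of_hasDerivWithinAt_nonneg (convex_Ici 0) ?_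
    (fun u _ => ((hasDerivAt_add_const_rpow hp u).sub
      (hasDerivAt_rpow_const (Or.inr hp))).hasDerivWithinAt) ?_
  · have hcont := continuous_rpow_const (by linarith : (0 : ℝ) ≤ p)
    exact ((hcont.comp (continuous_add_const δ)).sub hcont).continuousOn
  · intro u hu
    rw [interior_Ici, mem_Ioi] at hu
    have : u ^ (p - 1) ≤ (u + δ) ^ (p - 1) := rpow_le_rpow hu.le (by linarith) (by linarith)
    nlinarith

lemma antitoneOn_rpow_add_sub_rpow_sub_mul_rpow {p δ : ℝ} (hp1 : 1 ≤ p) (hp2 : p ≤ 2)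
    (hδ : 0 ≤ δ) :
    AntitoneOn (fun u : ℝ => (u + δ) ^ p - u ^ p - p * δ * u ^ (p - 1)) (Ici 0) := by
  refine antitoneOn_of_hasDerivWithinAt_nonpos (convex_Ici 0)
    (f' := fun u => p * (u + δ) ^ (p - 1) - p * u ^ (p - 1) - p * δ * ((p - 1) * u ^ (p - 1 - 1)))
    ?_ (fun u hu => ?_) ?_
  · have hcont := continuous_rpow_const (by linarith : (0 : ℝ) ≤ p)
    have hcont' := continuous_rpow_const (by linarith : (0 : ℝ) ≤ p - 1)
    exact (((hcont.comp (continuous_add_const δ)).sub hcont).sub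
      (continuous_const.mul hcont')).continuousOn
  · rw [interior_Ici, mem_Ioi] at hu
    exact (((hasDerivAt_add_const_rpow hp1 u).sub (hasDerivAt_rpow_const (Or.inr hp1))).sub
      ((hasDerivAt_rpow_const (Or.inl hu.ne')).const_mul (p * δ))).hasDerivWithinAt
  · intro u hu
    rw [interior_Ici, mem_Ioi] at hu
    have hconc := rpow_add_sub_rpow_le (q := p - 1) (by linarith) (by linarith) hu hδ
    nlinarith

lemma rpow_mul_theta1_div {H u δ : ℝ} (hu : 0 < u) (hδ : 0 ≤ δ) :
    u ^ (2 * H) / 2 * theta1 H (δ / u) = ((u + δ) ^ (2 * H) - u ^ (2 * H) - δ ^ (2 * H)) / 2 := by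
  have hsum : 1 + δ / u = (u + δ) / u := by field_simp
  rw [theta1, abs_of_nonneg (by positivity), abs_of_nonneg (by positivity), hsum,
    div_rpow (by positivity) hu.le, div_rpow hδ hu.le]
  field_simp

lemma dFn_eq {H δ s t : ℝ} (hs : 0 ≤ s) (hst : s < t) (hδ : 0 ≤ δ) :
    dFn H δ s t = (((t + δ) ^ (2 * H) - t ^ (2 * H))
      - ((t - s + δ) ^ (2 * H) - (t - s) ^ (2 * H))) / 2 := by
  rw [dFn, rpow_mul_theta1_div (by linarith) hδ, rpow_mul_theta1_div (by linarith) hδ]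
  ring

/-- For `H ∈ (1/2,1)` there is `C_H` such that, for all `0 < s < t` and
`δ ∈ (0,1]`, `|d(δ,s,t)| ≤ C_H δ s (t⁻¹ + 1)`. -/
theorem statement13 (H : ℝ) (hH : H ∈ Set.Ioo (1/2 : ℝ) 1) :
    ∃ C : ℝ, 0 < C ∧ ∀ s t δ : ℝ, 0 < s → s < t → 0 < δ → δ ≤ 1 →
      |dFn H δ s t| ≤ C * δ * s * (t⁻¹ + 1) := by
  obtain ⟨hH1, hH2⟩ := hH
  refine ⟨H, by linarith, fun s t δ hs hst hδ _ => ?_⟩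
  have ha : 0 < t - s := by linarith
  have hat : t - s ≤ t := by linarith
  have ht : 0 < t := ha.trans_le hat
  have hlower := monotoneOn_rpow_add_sub_rpow (p := 2 * H) (by linarith) hδ.le
    (mem_Ici.mpr ha.le) (mem_Ici.mpr ht.le) hat
  have hupper := antitoneOn_rpow_add_sub_rpow_sub_mul_rpow (p := 2 * H) (by linarith)
    (by linarith) hδ.le (mem_Ici.mpr ha.le) (mem_Ici.mpr ht.le) hat
  have hincr := rpow_sub_rpow_le_mul_rpow_sub_one (q := 2 * H - 1) (by linarith) ha hat
  have hpow := rpow_le_inv_add_one (e := 2 * H - 1 - 1) (by linarith) (by linarith) ht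
  rw [sub_sub_cancel] at hincr
  rw [dFn_eq hs.le hst hδ.le, abs_of_nonneg (by linarith)]
  calc _ ≤ 2 * H * δ * (t ^ (2 * H - 1) - (t - s) ^ (2 * H - 1)) / 2 := by linarith
    _ ≤ 2 * H * δ * (s * (t⁻¹ + 1)) / 2 := by gcongr; exact hincr.trans (by gcongr)
    _ = H * δ * s * (t⁻¹ + 1) := by ring
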